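/- arXiv:1809.05993 — 2 statements merged into one kernel-verified Lean document; each statement's English description precedes it below -/
import Mathlib

section
/- Suppose ⟨x, μ(x)⟩ + (2p̄-1)|σ(x)|^2 ≤ λ(1 + |x|^2) for all x ∈ ℝ^d, where λ ≥ 0, p̄ ≥ 1. Let π(x) = (min(|x|,R))·x/|x| (π(0)=0) for some R ≥ 1, and set μ̃(x) = μ(π(x)), σ̃(x) = σ(π(x)). Then ⟨x, μ̃(x)⟩ + (2p̄-1)|σ̃(x)|^2 ≤ 2λ(1 + |x|^2) for all x ∈ ℝ^d. -/
open scoped RealInnerProductSpace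

/-!
Inside the ball of radius `R` the truncation is the identity and the bound holds with `λ`.
Outside it, `π x = (R / ‖x‖) • x`, so `⟪x, μ (π x)⟫ = (‖x‖ / R) ⟪π x, μ (π x)⟫`; since the
diffusion term is nonnegative and `‖x‖ / R ≥ 1`, the hypothesis at `π x` (where `‖π x‖ = R`)
gives the bound `λ (1 + R²) ‖x‖ / R`, which is at most `2λ (1 + ‖x‖²)` because `1 ≤ R < ‖x‖`.
-/

noncomputable def truncateNorm {E : Type*} [SeminormedAddCommGroup E] [NormedSpace ℝ E]
    (R : ℝ) (x : E) : E :=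
  (min ‖x‖ R / ‖x‖) • x

section Truncation

variable {E : Type*} [NormedAddCommGroup E] [NormedSpace ℝ E] {R : ℝ} {x : E}

theorem truncateNorm_of_norm_le (h : ‖x‖ ≤ R) : truncateNorm R x = x := by
  rcases eq_or_ne x 0 with rfl | hx
  · simp [truncateNorm]
  · rw [truncateNorm, min_eq_left h, div_self (norm_ne_zero_iff.mpr hx), one_smul]

theorem truncateNorm_of_lt_norm (h : R < ‖x‖) : truncateNorm R x = (R / ‖x‖) • x := by
  rw [truncateNorm, min_eq_right h.le]

theorem norm_truncateNorm_of_lt_norm (hR : 0 ≤ R) (h : R < ‖x‖) : ‖truncateNorm R x‖ = R := by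
  have hx : 0 < ‖x‖ := hR.trans_lt h
  rw [truncateNorm_of_lt_norm h, norm_smul, Real.norm_of_nonneg (by positivity),
    div_mul_cancel₀ R hx.ne']

end Truncation

theorem inner_add_le_inv_mul_of_eq_smul {E : Type*} [NormedAddCommGroup E]
    [InnerProductSpace ℝ E] {x y v : E} {r s b : ℝ} (hr : 0 < r) (hr1 : r ≤ 1)
    (hy : y = r • x) (hs : 0 ≤ s) (h : ⟪y, v⟫ + s ≤ b) : ⟪x, v⟫ + s ≤ r⁻¹ * b := by
  have hxv : ⟪x, v⟫ = r⁻¹ * ⟪y, v⟫ := by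
    rw [hy, real_inner_smul_left, inv_mul_cancel_left₀ hr.ne']
  have hs' : s ≤ r⁻¹ * s := le_mul_of_one_le_left hs ((one_le_inv₀ hr).mpr hr1)
  calc ⟪x, v⟫ + s ≤ r⁻¹ * (⟪y, v⟫ + s) := by rw [hxv, mul_add]; linarith
    _ ≤ r⁻¹ * b := by gcongr

theorem one_add_sq_mul_div_le {R t : ℝ} (hR : 1 ≤ R) (hRt : R ≤ t) :
    (1 + R ^ 2) * (t / R) ≤ 2 * (1 + t ^ 2) := by
  rw [mul_div_assoc', div_le_iff₀ (by linarith)]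
  have ht : 1 ≤ t := hR.trans hRt
  have h₁ : R * (R * t) ≤ R * (t * t) := by gcongr
  have h₂ : t ≤ R * t ^ 2 := by nlinarith
  nlinarith

theorem truncated_khasminskii_preserved
    {E : Type*} [NormedAddCommGroup E] [InnerProductSpace ℝ E]
    (μ σ : E → E) (lam pbar R : ℝ)
    (hlam : 0 ≤ lam) (hp : 1 ≤ pbar) (hR : 1 ≤ R)
    (hK : ∀ x : E, (inner ℝ x (μ x) : ℝ) + (2*pbar - 1) * ‖σ x‖^2 ≤ lam * (1 + ‖x‖^2))
    (π : E → E) (hπ : ∀ x : E, π x = (min ‖x‖ R / ‖x‖) • x) :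
    ∀ x : E, (inner ℝ x (μ (π x)) : ℝ) + (2*pbar - 1) * ‖σ (π x)‖^2 ≤ 2 * lam * (1 + ‖x‖^2) := by
  obtain rfl : π = truncateNorm R := funext hπ
  intro x
  rcases le_or_gt ‖x‖ R with hx | hx
  · rw [truncateNorm_of_norm_le hx]
    nlinarith [hK x]
  · have hx0 : 0 < ‖x‖ := by linarith
    have hdiff : 0 ≤ (2 * pbar - 1) * ‖σ (truncateNorm R x)‖ ^ 2 := by
      have : 0 ≤ 2 * pbar - 1 := by linarith
      positivity
    have hKπ := inner_add_le_inv_mul_of_eq_smul (div_pos (by linarith) hx0)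
      ((div_le_one hx0).mpr hx.le) (truncateNorm_of_lt_norm hx) hdiff (hK _)
    rw [norm_truncateNorm_of_lt_norm (by linarith) hx, inv_div] at hKπ
    calc _ ≤ ‖x‖ / R * (lam * (1 + R ^ 2)) := hKπ
      _ = lam * ((1 + R ^ 2) * (‖x‖ / R)) := by ring
      _ ≤ lam * (2 * (1 + ‖x‖ ^ 2)) :=
        mul_le_mul_of_nonneg_left (one_add_sq_mul_div_le hR hx.le) hlam
      _ = 2 * lam * (1 + ‖x‖ ^ 2) := by ring
end

section
/- Suppose 2⟨x, μ(x)⟩ + |σ(x)|^2 + (1/2)|G(x)|^2 Δ ≤ -k(|x|) for all x ∈ ℝ^d, where k : [0,∞) → [0,∞) is nondecreasing. Let π(x) = (min(|x|,R))·x/|x| for R > 0 (π(0)=0), and μ̃(x) = μ(π(x)), σ̃(x) = σ(π(x)), G̃(x) = G(π(x)). Then 2⟨x, μ̃(x)⟩ + |σ̃(x)|^2 + (1/2)|G̃(x)|^2 Δ ≤ -k(|π(x)|) for all x. -/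
open scoped RealInnerProductSpace

/-- Radial truncation at radius `R` only shrinks vectors: `x` is recovered from its truncation by
scaling with `max 1 (‖x‖ / R) ≥ 1`. -/
lemma exists_one_le_smul_radialTrunc_eq {E : Type*} [NormedAddCommGroup E] [NormedSpace ℝ E]
    {R : ℝ} (hR : 0 < R) (x : E) :
    ∃ t : ℝ, 1 ≤ t ∧ t • ((min ‖x‖ R / ‖x‖) • x) = x := by
  refine ⟨max 1 (‖x‖ / R), le_max_left _ _, ?_⟩
  rcases eq_or_ne x 0 with rfl | hx
  · simp
  have hxn : 0 < ‖x‖ := norm_pos_iff.mpr hx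
  rw [smul_smul]
  convert one_smul ℝ x
  rcases le_total ‖x‖ R with hle | hle
  · have : ‖x‖ / R ≤ 1 := (div_le_one hR).mpr hle
    rw [min_eq_left hle, max_eq_left this, div_self hxn.ne', one_mul]
  · have : 1 ≤ ‖x‖ / R := (one_le_div hR).mpr hle
    rw [min_eq_right hle, max_eq_right this]
    field_simp

lemma two_inner_smul_add_le_of_one_le {E : Type*} [NormedAddCommGroup E] [InnerProductSpace ℝ E]
    {y v : E} {S K t : ℝ} (hS : 0 ≤ S) (hK : 0 ≤ K) (ht : 1 ≤ t)
    (h : 2 * ⟪y, v⟫ + S ≤ -K) :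
    2 * ⟪t • y, v⟫ + S ≤ -K := by
  have hinner : ⟪y, v⟫ ≤ 0 := by linarith
  rw [real_inner_smul_left]
  nlinarith

theorem truncated_dissipativity_preserved_general
    {E : Type*} [NormedAddCommGroup E] [InnerProductSpace ℝ E]
    (μ σ G : E → E) (Δ R : ℝ) (hΔ : 0 ≤ Δ) (hR : 0 < R)
    (k : ℝ → ℝ) (hk_nonneg : ∀ u : ℝ, 0 ≤ u → 0 ≤ k u)
    (hdiss : ∀ x : E, 2 * (inner ℝ x (μ x) : ℝ) + ‖σ x‖^2 + (1/2) * ‖G x‖^2 * Δ ≤ -k ‖x‖)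
    (π : E → E) (hπ : ∀ x : E, π x = (min ‖x‖ R / ‖x‖) • x) :
    ∀ x : E,
      2 * (inner ℝ x (μ (π x)) : ℝ) + ‖σ (π x)‖^2 + (1/2) * ‖G (π x)‖^2 * Δ ≤ -k ‖π x‖ := by
  intro x
  obtain ⟨t, ht, hx⟩ := exists_one_le_smul_radialTrunc_eq hR x
  rw [← hπ] at hx
  nth_rewrite 1 [← hx]
  rw [add_assoc]
  exact two_inner_smul_add_le_of_one_le (by positivity) (hk_nonneg _ (norm_nonneg _)) ht
    (by simpa only [add_assoc] using hdiss (π x))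

theorem truncated_dissipativity_preserved
    {E : Type*} [NormedAddCommGroup E] [InnerProductSpace ℝ E]
    (μ σ G : E → E) (Δ R : ℝ) (hΔ : 0 ≤ Δ) (hR : 0 < R)
    (k : ℝ → ℝ) (hk_nonneg : ∀ u : ℝ, 0 ≤ u → 0 ≤ k u)
    (hk_mono : MonotoneOn k (Set.Ici 0))
    (hdiss : ∀ x : E, 2 * (inner ℝ x (μ x) : ℝ) + ‖σ x‖^2 + (1/2) * ‖G x‖^2 * Δ ≤ -k ‖x‖)
    (π : E → E) (hπ : ∀ x : E, π x = (min ‖x‖ R / ‖x‖) • x) :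
    ∀ x : E,
      2 * (inner ℝ x (μ (π x)) : ℝ) + ‖σ (π x)‖^2 + (1/2) * ‖G (π x)‖^2 * Δ ≤ -k ‖π x‖ :=
  truncated_dissipativity_preserved_general μ σ G Δ R hΔ hR k hk_nonneg hdiss π hπ
end
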